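/- Let α, β, k be real numbers with α > 0, β > −1 and 0 < k < β + 1. Define the 2×2 real matrix α₀ = [[ (β−k+1)/((1+α+β−k)(1+k)(2+α+β−k)) + α(2+α+β−k)/((2+α+β)(1+α+β−k)), (β−k+1)/((1+k)(2+α+β−k)) ], [ (1+α)/((3+α+β)(2+α+β−k)), (1+α)(1+α+β−k)/((3+α+β)(2+α+β−k)) ]]. Then α₀ · μ₋₁ = μ₀. (Equivalently, for this choice of α₀ the matrix M = α₀^{−1}μ₀ − μ₋₁ vanishes, so the Geronimus-transformed spectral measure of the Darboux transform carries no Dirac mass at 0.) -/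
import Mathlib


open Matrix

/-- The zeroth moment `μ₀` of the weight `W` of the `d = 2` Jacobi-type
example. -/
noncomputable def mu0 (α β k : ℝ) : Matrix (Fin 2) (Fin 2) ℝ :=
  (Real.Gamma (α + 1) * Real.Gamma (β + 2) * (α + β - k + 2) /
      Real.Gamma (α + β + 3)) •
    !![1, 0; 0, (α + 1) * (k + 1) / ((α + β + 3) * (β - k + 1))]

/-- The `(-1)`-st moment `μ₋₁` of the weight `W` of the `d = 2` Jacobi-type
example. -/
noncomputable def muM1 (α β k : ℝ) : Matrix (Fin 2) (Fin 2) ℝ :=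
  (Real.Gamma α * Real.Gamma (β + 2) / Real.Gamma (α + β + 2)) •
    !![α + β - k + 1, -1;
       -1, ((α + 1) * (k + 1) * (α + β - k + 2) - k * (β - k + 1)) /
         ((α + β + 2) * (β - k + 1))]

/-- The choice `α₀` from \eqref{alf0m} satisfies `α₀ μ₋₁ = μ₀`, i.e. for this
choice the Dirac mass `M = α₀⁻¹μ₀ − μ₋₁` of the Geronimus-transformed spectral
measure vanishes. -/
theorem stmt_15 (α β k : ℝ) (hα : 0 < α) (hβ : β > -1)
    (hk : 0 < k) (hkβ : k < β + 1) :
    (!![(β - k + 1) / ((1 + α + β - k) * (1 + k) * (2 + α + β - k)) +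
          α * (2 + α + β - k) / ((2 + α + β) * (1 + α + β - k)),
        (β - k + 1) / ((1 + k) * (2 + α + β - k));
        (1 + α) / ((3 + α + β) * (2 + α + β - k)),
        (1 + α) * (1 + α + β - k) / ((3 + α + β) * (2 + α + β - k))] :
      Matrix (Fin 2) (Fin 2) ℝ) * muM1 α β k = mu0 α β k := by
  have hG1 : Real.Gamma (α + 1) = α * Real.Gamma α := Real.Gamma_add_one hα.ne'
  have hG3 : Real.Gamma (α + β + 3) = (α + β + 2) * Real.Gamma (α + β + 2) := by
    have := Real.Gamma_add_one (show (α + β + 2 : ℝ) ≠ 0 from ne_of_gt (by linarith))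
    rw [show α + β + 2 + 1 = α + β + 3 by ring] at this; exact this
  have hGα : Real.Gamma α > 0 := Real.Gamma_pos_of_pos hα
  have hGβ : Real.Gamma (β + 2) > 0 := Real.Gamma_pos_of_pos (by linarith)
  have hGab : Real.Gamma (α + β + 2) > 0 := Real.Gamma_pos_of_pos (by linarith)
  have h1 : (1:ℝ) + α + β - k > 0 := by linarith
  have h2 : (2:ℝ) + α + β - k > 0 := by linarith
  have h3 : (1:ℝ) + k > 0 := by linarith
  have h4 : (2:ℝ) + α + β > 0 := by linarith
  have h5 : (3:ℝ) + α + β > 0 := by linarith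
  have h6 : β - k + 1 > 0 := by linarith
  have h7 : α + β + 2 > 0 := by linarith
  have h8 : α + β + 3 > 0 := by linarith
  ext i j
  fin_cases i <;> fin_cases j <;>
    simp [mu0, muM1, Matrix.mul_apply, Fin.sum_univ_two, hG1, hG3] <;>
    field_simp <;> ring
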